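/- A node reduction preserves the computation of a CDAG: if two compute nodes v₁, v₂ in a CDAG have the same set of predecessors and the same associated function, then the CDAG obtained by merging v₁ and v₂ into a single node (whose successors are the union of the successors of v₁ and v₂) is computationally equivalent to the original CDAG. -/
import Mathlib


/-- Node reduction preserves the computation of a CDAG: merging two compute
nodes with the same predecessors and the same function (redirecting all edges
out of `v₂` to emanate from `v₁`) leaves the value at the exit node unchanged. -/
theorem node_reduction_preserves_computation {V : Type*} [DecidableEq V]
    (preds : V → List V) (fn : V → List ℝ → ℝ) (exit v₁ v₂ : V)
    (hacyc : WellFounded fun a b : V => a ∈ preds b)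
    (hne : v₁ ≠ v₂)
    (hpreds : preds v₁ = preds v₂) (hfn : fn v₁ = fn v₂)
    (val : V → ℝ) (hval : ∀ w, val w = fn w ((preds w).map val))
    (val' : V → ℝ)
    (hval' : ∀ w, w ≠ v₂ →
      val' w = fn w (((preds w).map fun u => if u = v₂ then v₁ else u).map val'))
    (hexit : exit ≠ v₂) :
    val' exit = val exit := by
  have key : ∀ w : V, val' (if w = v₂ then v₁ else w) = val w := by
    intro w
    induction w using hacyc.induction with
    | _ w ih =>
      by_cases hw : w = v₂
      · subst hw
        rw [if_pos rfl]
        rw [hval' v₁ hne, hval w, hfn, hpreds, List.map_map]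
        congr 1
        refine List.map_congr_left fun u hu => ?_
        exact ih u hu
      · simp only [if_neg hw]
        rw [hval' w hw, hval w, List.map_map]
        congr 1
        refine List.map_congr_left fun u hu => ?_
        exact ih u hu
  have := key exit
  rwa [if_neg hexit] at this
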